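/- Let K be a scattered compact Hausdorff space whose derived set K′ is infinite, with scalars real or complex. Then there exists a linear isometric embedding T : C₀[1, ω²) → C(K) that preserves moduli, i.e., T(|f|) = |Tf| for every f ∈ C₀[1, ω²). Consequently, C(K) contains a closed subspace isometric to c₀ that does SPR. -/

import Mathlib

open scoped ZeroAtInfty

noncomputable section

/-- The pointwise modulus of a continuous function, as a real-valued continuous function. -/
def cmAbs {K : Type*} [TopologicalSpace K] {𝕜 : Type*} [RCLike 𝕜]
    (f : C(K, 𝕜)) : C(K, ℝ) :=
  ⟨fun x => ‖f x‖, (map_continuous f).norm⟩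

/-- The pointwise modulus of a continuous function, as a `𝕜`-valued continuous function. -/
def kAbs {K : Type*} [TopologicalSpace K] {𝕜 : Type*} [RCLike 𝕜]
    (f : C(K, 𝕜)) : C(K, 𝕜) :=
  ⟨fun x => algebraMap ℝ 𝕜 ‖f x‖,
    (continuous_algebraMap ℝ 𝕜).comp (map_continuous f).norm⟩

/-- `inf_{‖λ‖ = 1} ‖f - λ • g‖`. -/
def sprInf {K : Type*} [TopologicalSpace K] [CompactSpace K] {𝕜 : Type*} [RCLike 𝕜]
    (f g : C(K, 𝕜)) : ℝ :=
  ⨅ l : {c : 𝕜 // ‖c‖ = 1}, ‖f - (l : 𝕜) • g‖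

/-- A subspace `E ⊆ C(K, 𝕜)` does `C`-stable phase retrieval. -/
def DoesCSPR {K : Type*} [TopologicalSpace K] [CompactSpace K] {𝕜 : Type*} [RCLike 𝕜]
    (E : Submodule 𝕜 C(K, 𝕜)) (C : ℝ) : Prop :=
  ∀ f ∈ E, ∀ g ∈ E, sprInf f g ≤ C * ‖cmAbs f - cmAbs g‖

/-- A subspace `E ⊆ C(K, 𝕜)` does stable phase retrieval. -/
def DoesSPR {K : Type*} [TopologicalSpace K] [CompactSpace K] {𝕜 : Type*} [RCLike 𝕜]
    (E : Submodule 𝕜 C(K, 𝕜)) : Prop :=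
  ∃ C : ℝ, 1 ≤ C ∧ DoesCSPR E C

/-- Ordinal intervals `[a, b]` (with the order topology of the ordinals) are compact spaces. -/
instance ordIccCompact (a b : Ordinal.{0}) : CompactSpace (Set.Icc a b) :=
  isCompact_iff_compactSpace.mp isCompact_Icc

/-- The point `ω ^ 2` of the ordinal interval `[1, ω ^ 2]`. -/
def omegaSqTop : Set.Icc (1 : Ordinal.{0}) (Ordinal.omega0 ^ (2 : Ordinal.{0})) :=
  ⟨Ordinal.omega0 ^ (2 : Ordinal.{0}),
    ⟨Order.one_le_iff_pos.mpr (Ordinal.opow_pos _ Ordinal.omega0_pos), le_rfl⟩⟩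

/-- `C₀[1, ω²)`: the subspace of `C([1, ω²])` of functions vanishing at `ω²`. -/
def C0sub (𝕜 : Type*) [RCLike 𝕜] :
    Submodule 𝕜 C(Set.Icc (1 : Ordinal.{0}) (Ordinal.omega0 ^ (2 : Ordinal.{0})), 𝕜) where
  carrier := {f | f omegaSqTop = 0}
  add_mem' := by
    intro a b ha hb
    simp only [Set.mem_setOf_eq, ContinuousMap.add_apply] at *
    rw [ha, hb, add_zero]
  zero_mem' := rfl
  smul_mem' := by
    intro c f hf
    simp only [Set.mem_setOf_eq, ContinuousMap.smul_apply] at *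
    rw [hf, smul_zero]

theorem kAbs_mem {𝕜 : Type*} [RCLike 𝕜] (f : C0sub 𝕜) :
    kAbs (f : C(Set.Icc (1 : Ordinal.{0}) (Ordinal.omega0 ^ (2 : Ordinal.{0})), 𝕜)) ∈
      C0sub 𝕜 := by
  have h : (f : C(Set.Icc (1 : Ordinal.{0}) (Ordinal.omega0 ^ (2 : Ordinal.{0})), 𝕜))
      omegaSqTop = 0 := f.2
  show kAbs _ omegaSqTop = 0
  simp [kAbs, h]

/-! A scattered compact Hausdorff space is totally disconnected, hence has a clopen base. Since
`K'` is infinite there is a decreasing sequence of clopen sets whose differences (the rows) each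
contain an accumulation point, and each row contains a decreasing sequence of clopen sets with
nonempty differences. Ranking the points of `K` along this two-level filtration gives a
continuous surjection `φ : K → [1, ω²]`, and `f ↦ f ∘ φ` is an isometric embedding commuting
with moduli.

For `c₀`, the sequence `a` is sent to the function on `[1, ω²]` whose `n`-th row lists `a n` and
`2/3 (a n + a m / 2)`, `2/3 (a n + I a m / 2)` for all `m > n`. By polarization, the moduli of
these values determine every `conj (a n) * a m`, stably, so they determine `a` up to a global
phase with a linear error bound: the range does stable phase retrieval, and so does its image
under `f ↦ f ∘ φ`. -/

open Set Topology Filter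

theorem totallyDisconnectedSpace_of_not_exists_perfect {K : Type*} [TopologicalSpace K]
    [T1Space K] (h : ¬∃ P : Set K, P.Nonempty ∧ Perfect P) : TotallyDisconnectedSpace K := by
  refine ⟨fun t _ ht => not_not.mp fun hnt => h ?_⟩
  rw [Set.not_subsingleton_iff] at hnt
  exact ⟨closure t, hnt.nonempty.closure, (ht.preperfect_of_nontrivial hnt).perfect_closure⟩

theorem continuous_of_isClopen_preimage_Ioi {X α : Type*} [TopologicalSpace X] [LinearOrder α]
    [TopologicalSpace α] [OrderTopology α] {f : X → α} (hf : ∀ b, IsClopen (f ⁻¹' Ioi b)) :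
    Continuous f := by
  rw [OrderTopology.topology_eq_generate_intervals (α := α), continuous_generateFrom_iff]
  rintro s ⟨b, rfl | rfl⟩
  · exact (hf b).isOpen
  · have hIio : f ⁻¹' Iio b = ⋃ a ∈ Iio b, (f ⁻¹' Ioi a)ᶜ := by
      ext x
      simp only [mem_preimage, mem_Iio, mem_iUnion, mem_compl_iff, mem_Ioi, not_lt, exists_prop]
      exact ⟨fun h => ⟨f x, h, le_rfl⟩, fun ⟨a, ha, hxa⟩ => hxa.trans_lt ha⟩
    rw [hIio]
    exact isOpen_biUnion fun a _ => (hf a).compl.isOpen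

theorem continuousAt_of_forall_dist_lt {α X : Type*} [LinearOrder α] [TopologicalSpace α]
    [OrderTopology α] [SuccOrder α] [PseudoMetricSpace X] {f : α → X} {p : α}
    (hp : ∃ l, l < p) (h : ∀ ε > 0, ∃ b < p, ∀ q, b < q → q < p → dist (f q) (f p) < ε) :
    ContinuousAt f p := by
  rw [ContinuousAt, (SuccOrder.hasBasis_nhds_Ioc_of_exists_lt hp).tendsto_iff
    Metric.nhds_basis_ball]
  intro ε hε
  obtain ⟨b, hb, hf⟩ := h ε hε
  refine ⟨b, hb, fun q hq => ?_⟩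
  rcases hq.2.lt_or_eq with hlt | rfl
  exacts [hf q hq.1 hlt, Metric.mem_ball_self hε]

theorem continuousAt_of_not_isSuccLimit {α X : Type*} [LinearOrder α] [TopologicalSpace α]
    [OrderTopology α] [SuccOrder α] [NoMaxOrder α] [TopologicalSpace X] {f : α → X} {p : α}
    (hp : ¬Order.IsSuccLimit p) : ContinuousAt f p := by
  rw [ContinuousAt, SuccOrder.nhds_eq_pure.mpr hp]
  exact tendsto_pure_nhds f p

section ExitIndex

variable {X α : Type*} [ConditionallyCompleteLinearOrderBot α] [WellFoundedLT α]

def exitIndex (F : α → Set X) (x : X) : α := sInf {b | x ∉ F b}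

variable {F : α → Set X} {o : α}

theorem lt_exitIndex_iff (hF : Antitone F) (ho : F o = ∅) {x : X} {b : α} :
    b < exitIndex F x ↔ x ∈ F b := by
  have hne : {b | x ∉ F b}.Nonempty := ⟨o, by simp [ho]⟩
  constructor
  · exact fun hb => not_not.mp fun hx => (csInf_le' hx).not_gt hb
  · exact fun hx => lt_of_not_ge fun hle => csInf_mem hne (hF hle hx)

theorem exitIndex_eq_iff (hF : Antitone F) (ho : F o = ∅) {x : X} {b : α} :
    exitIndex F x = b ↔ (∀ c < b, x ∈ F c) ∧ x ∉ F b := by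
  simp only [← lt_exitIndex_iff hF ho]
  constructor
  · rintro rfl
    exact ⟨fun c hc => hc, lt_irrefl _⟩
  · rintro ⟨hlt, hnot⟩
    exact le_antisymm (not_lt.mp hnot) (not_lt.mp fun h => lt_irrefl _ (hlt _ h))

theorem continuous_exitIndex [TopologicalSpace X] [TopologicalSpace α] [OrderTopology α]
    (hF : Antitone F) (ho : F o = ∅) (hclopen : ∀ b, IsClopen (F b)) :
    Continuous (exitIndex F) :=
  continuous_of_isClopen_preimage_Ioi fun b => by
    rw [show exitIndex F ⁻¹' Ioi b = F b from ext fun _ => lt_exitIndex_iff hF ho]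
    exact hclopen b

end ExitIndex

section OmegaGrid

open Ordinal

theorem omega0_opow_two : ω ^ (2 : Ordinal) = ω * ω := by
  rw [show (2 : Ordinal) = 1 + 1 by norm_num, opow_add, opow_one]

theorem omega0_mul_add_lt_omega0_mul_succ (n k : ℕ) : ω * n + k < ω * ↑(n + 1) := by
  rw [Nat.cast_succ, mul_add_one]
  exact add_lt_add_right (natCast_lt_omega0 k) _

theorem omega0_mul_add_lt_omega0_mul_omega0 (n k : ℕ) : ω * n + k < ω * ω :=
  (omega0_mul_add_lt_omega0_mul_succ n k).trans
    (mul_lt_mul_of_pos_left (natCast_lt_omega0 _) omega0_pos)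

theorem omega0_mul_add_le_omega0_mul_add_iff {n k n' k' : ℕ} :
    ω * n + k ≤ ω * n' + k' ↔ n < n' ∨ n = n' ∧ k ≤ k' := by
  constructor
  · intro h
    by_contra! hne
    rcases hne.1.lt_or_eq with hn | rfl
    · refine h.not_gt ((omega0_mul_add_lt_omega0_mul_succ n' k').trans_le ?_)
      exact (mul_le_mul_right (by exact_mod_cast hn) _).trans le_self_add
    · exact h.not_gt (add_lt_add_right (by exact_mod_cast hne.2 rfl) _)
  · rintro (hn | ⟨rfl, hk⟩)
    · refine ((omega0_mul_add_lt_omega0_mul_succ n k).trans_le ?_).le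
      exact (mul_le_mul_right (by exact_mod_cast hn) _).trans le_self_add
    · exact add_le_add_right (by exact_mod_cast hk) _

theorem omega0_mul_add_lt_omega0_mul_add_iff {n k n' k' : ℕ} :
    ω * n + k < ω * n' + k' ↔ n < n' ∨ n = n' ∧ k < k' := by
  rw [← not_le, omega0_mul_add_le_omega0_mul_add_iff]
  omega

theorem omega0_mul_add_inj {n k n' k' : ℕ} :
    ω * n + k = ω * n' + k' ↔ n = n' ∧ k = k' := by
  refine ⟨fun h => ?_, by rintro ⟨rfl, rfl⟩; rfl⟩
  have h₁ := omega0_mul_add_le_omega0_mul_add_iff.mp h.le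
  have h₂ := omega0_mul_add_le_omega0_mul_add_iff.mp h.ge
  omega

theorem exists_eq_omega0_mul_add {p : Ordinal} (h : p < ω * ω) :
    ∃ n k : ℕ, p = ω * n + k := by
  obtain ⟨n, hn⟩ := lt_omega0.mp ((lt_mul_iff_div_lt omega0_ne_zero).mp h)
  obtain ⟨k, hk⟩ := lt_omega0.mp (mod_lt p omega0_ne_zero)
  exact ⟨n, k, by rw [← hn, ← hk, div_add_mod]⟩

end OmegaGrid

section ClopenChain

variable {K : Type*} [TopologicalSpace K] [TotallySeparatedSpace K]

theorem IsClopen.exists_isClopen_subset_infinite {S W : Set K} (hW : IsClopen W)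
    (hS : (W ∩ S).Infinite) :
    ∃ A, IsClopen A ∧ A ⊆ W ∧ (A ∩ S).Infinite ∧ ((W \ A) ∩ S).Nonempty := by
  obtain ⟨x, hx, y, hy, hxy⟩ := hS.nontrivial
  obtain ⟨C, hC, hxC, hyC⟩ := exists_isClopen_of_totally_separated hxy
  have hsplit : W ∩ S = (W ∩ C) ∩ S ∪ (W \ C) ∩ S := by
    rw [← union_inter_distrib_right, inter_union_sdiff]
  rcases infinite_union.mp (hsplit ▸ hS) with h | h
  · exact ⟨W ∩ C, hW.inter hC, inter_subset_left, h, y, ⟨hy.1, fun h => hyC h.2⟩, hy.2⟩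
  · exact ⟨W \ C, hW.diff hC, sdiff_subset, h, x, ⟨hx.1, fun h => h.2 hxC⟩, hx.2⟩

theorem IsClopen.exists_antitone_isClopen {S W₀ : Set K} (hW₀ : IsClopen W₀)
    (hS : (W₀ ∩ S).Infinite) :
    ∃ W : ℕ → Set K, W 0 = W₀ ∧ Antitone W ∧ (∀ n, IsClopen (W n)) ∧
      ∀ n, ((W n \ W (n + 1)) ∩ S).Nonempty := by
  let Good := {W : Set K // IsClopen W ∧ (W ∩ S).Infinite}
  choose next hclopen hsub hinf hdiff using
    fun W : Good => W.2.1.exists_isClopen_subset_infinite W.2.2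
  let step : Good → Good := fun W => ⟨next W, hclopen W, hinf W⟩
  let W : ℕ → Good := fun n => step^[n] ⟨W₀, hW₀, hS⟩
  have hW : ∀ n, W (n + 1) = step (W n) := fun n => Function.iterate_succ_apply' step n _
  refine ⟨fun n => (W n).1, rfl, antitone_nat_of_succ_le fun n => ?_, fun n => (W n).2.1,
    fun n => ?_⟩
  · rw [hW]
    exact hsub _
  · simp only [hW]
    exact hdiff _

end ClopenChain

/-- A copy of the order structure of `[1, ω * ω]` inside `K`: the differences of the decreasing
clopen sets `outer n` are the rows, and `inner n` cuts the `n`-th row into nonempty layers. -/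
structure ClopenGrid (K : Type*) [TopologicalSpace K] where
  outer : ℕ → Set K
  inner : ℕ → ℕ → Set K
  outer_zero : outer 0 = Set.univ
  inner_zero (n : ℕ) : inner n 0 = outer n \ outer (n + 1)
  antitone_outer : Antitone outer
  antitone_inner (n : ℕ) : Antitone (inner n)
  isClopen_outer (n : ℕ) : IsClopen (outer n)
  isClopen_inner (n k : ℕ) : IsClopen (inner n k)
  nonempty_inner_diff (n k : ℕ) : (inner n k \ inner n (k + 1)).Nonempty

namespace ClopenGrid

open Ordinal

variable {K : Type*} [TopologicalSpace K] (G : ClopenGrid K)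

theorem inner_subset_outer_diff (n k : ℕ) : G.inner n k ⊆ G.outer n \ G.outer (n + 1) :=
  G.inner_zero n ▸ G.antitone_inner n (Nat.zero_le k)

/-- The points of rank `> β`: the rank of a point of `inner n k \ inner n (k + 1)` is
`ω * n + (k + 1)`, of a point of `⋂ k, inner n k` it is `ω * (n + 1)`, and of a point of
`⋂ n, outer n` it is `ω * ω`. -/
def filtration (β : Ordinal) : Set K :=
  {x | ∃ n k : ℕ, β = ω * n + k ∧ x ∈ G.inner n k ∪ G.outer (n + 1)}

theorem filtration_omega0_mul_add (n k : ℕ) :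
    G.filtration (ω * n + k) = G.inner n k ∪ G.outer (n + 1) := by
  ext x
  constructor
  · rintro ⟨n', k', h, hx⟩
    obtain ⟨rfl, rfl⟩ := omega0_mul_add_inj.mp h
    exact hx
  · exact fun hx => ⟨n, k, rfl, hx⟩

theorem filtration_omega0_mul_omega0 : G.filtration (ω * ω) = ∅ :=
  eq_empty_of_forall_notMem fun _ ⟨n, k, h, _⟩ =>
    (omega0_mul_add_lt_omega0_mul_omega0 n k).ne' h

theorem isClopen_filtration (β : Ordinal) : IsClopen (G.filtration β) := by
  by_cases hβ : β < ω * ω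
  · obtain ⟨n, k, rfl⟩ := exists_eq_omega0_mul_add hβ
    rw [filtration_omega0_mul_add]
    exact (G.isClopen_inner n k).union (G.isClopen_outer (n + 1))
  · convert isClopen_empty
    exact eq_empty_of_forall_notMem fun _ ⟨n, k, h, _⟩ =>
      hβ (h ▸ omega0_mul_add_lt_omega0_mul_omega0 n k)

theorem antitone_filtration : Antitone G.filtration := by
  rintro β β' hββ' x ⟨n', k', rfl, hx⟩
  obtain ⟨n, k, rfl⟩ :=
    exists_eq_omega0_mul_add (hββ'.trans_lt (omega0_mul_add_lt_omega0_mul_omega0 n' k'))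
  rw [filtration_omega0_mul_add]
  rcases omega0_mul_add_le_omega0_mul_add_iff.mp hββ' with hn | ⟨rfl, hk⟩
  · refine Or.inr (G.antitone_outer hn ?_)
    rcases hx with hx | hx
    · exact (G.inner_subset_outer_diff n' k' hx).1
    · exact G.antitone_outer (Nat.le_succ n') hx
  · exact hx.imp_left fun h => G.antitone_inner n hk h

def rank : K → Ordinal := exitIndex G.filtration

theorem continuous_rank : Continuous G.rank :=
  continuous_exitIndex G.antitone_filtration G.filtration_omega0_mul_omega0
    G.isClopen_filtration

theorem rank_eq_iff {x : K} {p : Ordinal} :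
    G.rank x = p ↔ (∀ β < p, x ∈ G.filtration β) ∧ x ∉ G.filtration p :=
  exitIndex_eq_iff G.antitone_filtration G.filtration_omega0_mul_omega0

theorem one_le_rank (x : K) : 1 ≤ G.rank x := by
  rw [Order.one_le_iff_pos, rank, lt_exitIndex_iff G.antitone_filtration
    G.filtration_omega0_mul_omega0]
  have h := G.filtration_omega0_mul_add 0 0
  simp only [Nat.cast_zero, mul_zero, add_zero] at h
  rw [h, G.inner_zero, sdiff_union_self, G.outer_zero, univ_union]
  trivial

theorem rank_le (x : K) : G.rank x ≤ ω * ω := by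
  refine not_lt.mp fun h => ?_
  rw [rank, lt_exitIndex_iff G.antitone_filtration G.filtration_omega0_mul_omega0,
    filtration_omega0_mul_omega0] at h
  exact h

theorem rank_of_mem_inner_diff {n k : ℕ} {x : K} (hx : x ∈ G.inner n k \ G.inner n (k + 1)) :
    G.rank x = ω * n + ↑(k + 1) := by
  rw [rank_eq_iff, filtration_omega0_mul_add]
  refine ⟨fun β hβ => G.antitone_filtration (?_ : β ≤ ω * n + k) ?_, ?_⟩
  · rw [Nat.cast_succ, ← add_assoc] at hβ
    exact Order.lt_add_one_iff.mp hβ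
  · rw [filtration_omega0_mul_add]
    exact Or.inl hx.1
  · rintro (h | h)
    exacts [hx.2 h, (G.inner_subset_outer_diff n k hx.1).2 h]

theorem rank_of_forall_mem_inner {n : ℕ} {x : K} (hx : ∀ k, x ∈ G.inner n k) :
    G.rank x = ω * ↑(n + 1) := by
  have hx' := G.inner_subset_outer_diff n 0 (hx 0)
  rw [← add_zero (ω * _), ← Nat.cast_zero, rank_eq_iff, filtration_omega0_mul_add]
  refine ⟨fun β hβ => ?_, ?_⟩
  · obtain ⟨n', k', rfl⟩ :=
      exists_eq_omega0_mul_add (hβ.trans (omega0_mul_add_lt_omega0_mul_omega0 _ _))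
    have hn' : n' ≤ n := by
      have := omega0_mul_add_lt_omega0_mul_add_iff.mp hβ
      omega
    rw [filtration_omega0_mul_add]
    rcases hn'.lt_or_eq with hn' | rfl
    · exact Or.inr (G.antitone_outer hn' hx'.1)
    · exact Or.inl (hx k')
  · rintro (h | h)
    · exact hx'.2 (G.inner_subset_outer_diff _ 0 h).1
    · exact hx'.2 (G.antitone_outer (Nat.le_succ _) h)

theorem rank_of_forall_mem_outer {x : K} (hx : ∀ n, x ∈ G.outer n) : G.rank x = ω * ω := by
  rw [rank_eq_iff, filtration_omega0_mul_omega0]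
  refine ⟨fun β hβ => ?_, notMem_empty x⟩
  obtain ⟨n, k, rfl⟩ := exists_eq_omega0_mul_add hβ
  rw [filtration_omega0_mul_add]
  exact Or.inr (hx _)

theorem exists_rank_eq [CompactSpace K] {p : Ordinal} (h₁ : 1 ≤ p) (h₂ : p ≤ ω * ω) :
    ∃ x, G.rank x = p := by
  have hInter : ∀ t : ℕ → Set K, Antitone t → (∀ i, IsClopen (t i)) → (∀ i, (t i).Nonempty) →
      (⋂ i, t i).Nonempty := fun t ht hc hne =>
    IsCompact.nonempty_iInter_of_directed_nonempty_isCompact_isClosed t ht.directed_ge hne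
      (fun i => (hc i).1.isCompact) (fun i => (hc i).1)
  rcases h₂.lt_or_eq with hp | rfl
  · obtain ⟨n, k | j, rfl⟩ := exists_eq_omega0_mul_add hp
    · obtain _ | m := n
      · simp at h₁
      obtain ⟨x, hx⟩ := hInter (G.inner m) (G.antitone_inner m) (G.isClopen_inner m)
        fun k => (G.nonempty_inner_diff m k).mono sdiff_subset
      exact ⟨x, by rw [G.rank_of_forall_mem_inner (mem_iInter.mp hx)]; simp⟩
    · obtain ⟨x, hx⟩ := G.nonempty_inner_diff n j
      exact ⟨x, G.rank_of_mem_inner_diff hx⟩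
  · obtain ⟨x, hx⟩ := hInter G.outer G.antitone_outer G.isClopen_outer fun n =>
      (G.nonempty_inner_diff n 0).mono
        (sdiff_subset.trans ((G.inner_subset_outer_diff n 0).trans sdiff_subset))
    exact ⟨x, G.rank_of_forall_mem_outer (mem_iInter.mp hx)⟩

theorem nonempty_of_infinite_derivedSet [TotallySeparatedSpace K]
    (h : (derivedSet (univ : Set K)).Infinite) :
    Nonempty (ClopenGrid K) := by
  obtain ⟨W, hW0, hWanti, hWclopen, hWdiff⟩ :=
    isClopen_univ.exists_antitone_isClopen (S := derivedSet univ) (by rwa [univ_inter])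
  have hinf : ∀ n, (W n \ W (n + 1)).Infinite := fun n => by
    obtain ⟨y, hy, hyacc⟩ := hWdiff n
    have : (𝓝[≠] y).NeBot := by simpa [AccPt] using hyacc
    exact infinite_of_mem_nhds y (((hWclopen n).diff (hWclopen (n + 1))).isOpen.mem_nhds hy)
  choose V hV0 hVanti hVclopen hVdiff using fun n =>
    ((hWclopen n).diff (hWclopen (n + 1))).exists_antitone_isClopen (S := W n \ W (n + 1))
      (by rw [inter_self]; exact hinf n)
  exact ⟨⟨W, V, hW0, hV0, hWanti, hVanti, hWclopen, hVclopen,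
    fun n k => (hVdiff n k).mono inter_subset_left⟩⟩

end ClopenGrid

theorem exists_continuous_surjective_Icc_one_omega0_opow_two {K : Type*} [TopologicalSpace K]
    [CompactSpace K] [T2Space K] (hscat : ¬∃ P : Set K, P.Nonempty ∧ Perfect P)
    (hinf : (derivedSet (univ : Set K)).Infinite) :
    ∃ φ : C(K, Icc (1 : Ordinal.{0}) (Ordinal.omega0 ^ (2 : Ordinal.{0}))),
      Function.Surjective φ := by
  have := totallyDisconnectedSpace_of_not_exists_perfect hscat
  obtain ⟨G⟩ := ClopenGrid.nonempty_of_infinite_derivedSet hinf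
  refine ⟨⟨fun x => ⟨G.rank x, G.one_le_rank x, omega0_opow_two ▸ G.rank_le x⟩,
    G.continuous_rank.subtype_mk _⟩, ?_⟩
  rintro ⟨p, hp₁, hp₂⟩
  obtain ⟨x, hx⟩ := G.exists_rank_eq hp₁ (omega0_opow_two ▸ hp₂)
  exact ⟨x, Subtype.ext hx⟩

section CompRight

variable {X Y : Type*} [TopologicalSpace X] [TopologicalSpace Y] [CompactSpace X] [CompactSpace Y]

theorem ContinuousMap.norm_comp_of_surjective {E : Type*} [NormedAddCommGroup E] (g : C(Y, E))
    {φ : C(X, Y)} (hφ : Function.Surjective φ) : ‖g.comp φ‖ = ‖g‖ := by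
  refine le_antisymm ((norm_le _ (norm_nonneg g)).mpr fun x => g.norm_coe_le_norm (φ x))
    ((norm_le _ (norm_nonneg _)).mpr fun y => ?_)
  obtain ⟨x, rfl⟩ := hφ y
  exact (g.comp φ).norm_coe_le_norm x

variable (𝕜 : Type*) [NormedField 𝕜]

def ContinuousMap.compRightLinearIsometry (φ : C(X, Y)) (hφ : Function.Surjective φ) :
    C(Y, 𝕜) →ₗᵢ[𝕜] C(X, 𝕜) where
  __ := (compRightAlgHom 𝕜 𝕜 φ).toLinearMap
  norm_map' g := g.norm_comp_of_surjective hφ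

end CompRight

section SPR

variable {K : Type*} [TopologicalSpace K] [CompactSpace K] {𝕜 : Type*} [RCLike 𝕜]

theorem sprInf_le {f g : C(K, 𝕜)} {c : 𝕜} (hc : ‖c‖ = 1) : sprInf f g ≤ ‖f - c • g‖ :=
  ciInf_le ⟨0, by rintro _ ⟨l, rfl⟩; exact norm_nonneg _⟩ (⟨c, hc⟩ : {c : 𝕜 // ‖c‖ = 1})

theorem abs_norm_sub_norm_le_norm_cmAbs_sub (f g : C(K, 𝕜)) (x : K) :
    |‖f x‖ - ‖g x‖| ≤ ‖cmAbs f - cmAbs g‖ :=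
  (cmAbs f - cmAbs g).norm_coe_le_norm x

theorem DoesCSPR.map_compRightLinearIsometry {L : Type*} [TopologicalSpace L] [CompactSpace L]
    {E : Submodule 𝕜 C(L, 𝕜)} {C : ℝ} (hE : DoesCSPR E C) {φ : C(K, L)}
    (hφ : Function.Surjective φ) :
    DoesCSPR (E.map (ContinuousMap.compRightLinearIsometry 𝕜 φ hφ).toLinearMap) C := by
  rintro _ ⟨f, hf, rfl⟩ _ ⟨g, hg, rfl⟩
  set T := ContinuousMap.compRightLinearIsometry 𝕜 φ hφ
  have hinf : sprInf (T f) (T g) = sprInf f g := by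
    unfold sprInf
    congr 1
    ext l
    rw [← map_smul, ← map_sub, LinearIsometry.norm_map]
  have habs : ‖cmAbs (T f) - cmAbs (T g)‖ = ‖cmAbs f - cmAbs g‖ :=
    (cmAbs f - cmAbs g).norm_comp_of_surjective hφ
  change sprInf (T f) (T g) ≤ C * ‖cmAbs (T f) - cmAbs (T g)‖
  rw [hinf, habs]
  exact hE f hf g hg

end SPR

namespace ZeroAtInftyContinuousMap

variable {α E : Type*} [TopologicalSpace α] [NormedAddCommGroup E]

theorem norm_apply_le (a : C₀(α, E)) (x : α) : ‖a x‖ ≤ ‖a‖ :=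
  norm_toBCF_eq_norm (f := a) ▸ a.toBCF.norm_coe_le_norm x

theorem norm_le_of_forall {a : C₀(α, E)} {C : ℝ} (hC : 0 ≤ C) (h : ∀ x, ‖a x‖ ≤ C) : ‖a‖ ≤ C :=
  norm_toBCF_eq_norm (f := a) ▸ (BoundedContinuousFunction.norm_le hC).mpr h

theorem exists_lt_norm_apply (a : C₀(α, E)) {r : ℝ} (hr₀ : 0 ≤ r) (hr : r < ‖a‖) :
    ∃ x, r < ‖a x‖ := by
  by_contra! h
  exact (norm_le_of_forall hr₀ h).not_gt hr

theorem exists_forall_norm_le (a : C₀(ℕ, E)) {ε : ℝ} (hε : 0 < ε) :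
    ∃ N, ∀ i, N ≤ i → ‖a i‖ ≤ ε := by
  have h := cocompact_eq_atTop (α := ℕ) ▸ zero_at_infty a
  simpa [eventually_atTop] using h.eventually (Metric.closedBall_mem_nhds 0 hε)

end ZeroAtInftyContinuousMap

section PhaseRetrieval

open RCLike ComplexConjugate

variable {𝕜 : Type*} [RCLike 𝕜]

theorem RCLike.norm_I_le_one : ‖(I : 𝕜)‖ ≤ 1 := by
  rw [norm_I]
  split_ifs <;> norm_num

theorem RCLike.norm_le_abs_re_add_abs_im (z : 𝕜) : ‖z‖ ≤ |re z| + |im z| :=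
  calc ‖z‖ = ‖(re z : 𝕜) + im z * I‖ := by rw [re_add_im]
    _ ≤ |re z| + |im z| * ‖(I : 𝕜)‖ := by
      refine (norm_add_le _ _).trans_eq ?_
      rw [norm_mul, norm_ofReal, norm_ofReal]
    _ ≤ |re z| + |im z| := by
      gcongr
      exact mul_le_of_le_one_right (abs_nonneg _) norm_I_le_one

theorem RCLike.norm_add_sq_eq (x y : 𝕜) :
    ‖x + y‖ ^ 2 = ‖x‖ ^ 2 + 2 * re (conj x * y) + ‖y‖ ^ 2 := by
  rw [norm_add_sq (𝕜 := 𝕜), RCLike.inner_apply']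

theorem abs_sq_sub_sq_le {s t M d : ℝ} (hs : 0 ≤ s) (ht : 0 ≤ t) (hsM : s ≤ M) (htM : t ≤ M)
    (h : |s - t| ≤ d) : |s ^ 2 - t ^ 2| ≤ 2 * M * d := by
  rw [sq_sub_sq, abs_mul, abs_of_nonneg (add_nonneg hs ht)]
  exact mul_le_mul (by linarith) h (abs_nonneg _) (by linarith)

/-- Polarization: the moduli of `x`, `y` and `x + c * y` determine `re (c * conj x * y)`. -/
theorem abs_re_mul_conj_mul_sub_le {x y x' y' c : 𝕜} {M δ : ℝ} (hc : ‖c‖ ≤ 2⁻¹)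
    (hx : ‖x‖ ≤ M) (hy : ‖y‖ ≤ M) (hx' : ‖x'‖ ≤ M) (hy' : ‖y'‖ ≤ M)
    (hxx' : |‖x‖ - ‖x'‖| ≤ δ) (hyy' : |‖y‖ - ‖y'‖| ≤ δ)
    (hsum : |‖x + c * y‖ - ‖x' + c * y'‖| ≤ 3 / 2 * δ) :
    |re (c * (conj x * y - conj x' * y'))| ≤ 7 / 2 * M * δ := by
  have hsum_le : ∀ u v : 𝕜, ‖u‖ ≤ M → ‖v‖ ≤ M → ‖u + c * v‖ ≤ 3 / 2 * M := fun u v hu hv => by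
    have := mul_le_mul hc hv (norm_nonneg _) (by norm_num)
    rw [← norm_mul] at this
    linarith [norm_add_le u (c * v)]
  have hcy : |‖c * y‖ - ‖c * y'‖| ≤ 2⁻¹ * δ := by
    rw [norm_mul, norm_mul, ← mul_sub, abs_mul, abs_norm]
    exact mul_le_mul hc hyy' (abs_nonneg _) (by norm_num)
  have h₁ := abs_sq_sub_sq_le (norm_nonneg _) (norm_nonneg _) (hsum_le _ _ hx hy)
    (hsum_le _ _ hx' hy') hsum
  have h₂ := abs_sq_sub_sq_le (norm_nonneg _) (norm_nonneg _) hx hx' hxx'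
  have h₃ := abs_sq_sub_sq_le (norm_nonneg _) (norm_nonneg _)
    (norm_mul_le_of_le hc hy) (norm_mul_le_of_le hc hy') hcy
  have hexp : 2 * re (c * (conj x * y - conj x' * y')) =
      (‖x + c * y‖ ^ 2 - ‖x' + c * y'‖ ^ 2) - (‖x‖ ^ 2 - ‖x'‖ ^ 2) -
        (‖c * y‖ ^ 2 - ‖c * y'‖ ^ 2) := by
    rw [norm_add_sq_eq, norm_add_sq_eq, mul_sub, map_sub]
    ring_nf
  rw [abs_le] at h₁ h₂ h₃ ⊢
  constructor <;> linarith [h₁.1, h₁.2, h₂.1, h₂.2, h₃.1, h₃.2]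

theorem norm_conj_mul_sub_le {x y x' y' : 𝕜} {M δ : ℝ}
    (hx : ‖x‖ ≤ M) (hy : ‖y‖ ≤ M) (hx' : ‖x'‖ ≤ M) (hy' : ‖y'‖ ≤ M)
    (hxx' : |‖x‖ - ‖x'‖| ≤ δ) (hyy' : |‖y‖ - ‖y'‖| ≤ δ)
    (hre : |‖x + ((2⁻¹ : ℝ) : 𝕜) * y‖ - ‖x' + ((2⁻¹ : ℝ) : 𝕜) * y'‖| ≤ 3 / 2 * δ)
    (him : |‖x + ((2⁻¹ : ℝ) : 𝕜) * I * y‖ - ‖x' + ((2⁻¹ : ℝ) : 𝕜) * I * y'‖| ≤ 3 / 2 * δ) :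
    ‖conj x * y - conj x' * y'‖ ≤ 14 * M * δ := by
  have hhalf : ‖((2⁻¹ : ℝ) : 𝕜)‖ = 2⁻¹ := by rw [norm_ofReal]; norm_num
  have h₁ := abs_re_mul_conj_mul_sub_le hhalf.le hx hy hx' hy' hxx' hyy' hre
  have h₂ := abs_re_mul_conj_mul_sub_le (c := ((2⁻¹ : ℝ) : 𝕜) * I)
    (by rw [norm_mul, hhalf]; exact mul_le_of_le_one_right (by norm_num) norm_I_le_one)
    hx hy hx' hy' hxx' hyy' him
  rw [re_ofReal_mul, abs_mul, abs_of_pos (by norm_num : (0 : ℝ) < 2⁻¹)] at h₁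
  rw [mul_assoc, re_ofReal_mul, I_mul_re, abs_mul, abs_of_pos (by norm_num : (0 : ℝ) < 2⁻¹),
    abs_neg] at h₂
  linarith [norm_le_abs_re_add_abs_im (conj x * y - conj x' * y')]

theorem norm_sub_le_of_norm_conj_mul_sub_le {u v u' v' : 𝕜} {A δ : ℝ} (hδ : 0 ≤ δ)
    (hA : 8 * δ < A) (hu : 3 / 4 * A ≤ ‖u‖) (huu' : ‖u - u'‖ ≤ δ) (hv' : ‖v'‖ ≤ A + δ)
    (huv : ‖conj u * v - conj u' * v'‖ ≤ 16 * A * δ) : ‖v - v'‖ ≤ 24 * δ := by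
  have hsplit : conj u * (v - v') = (conj u * v - conj u' * v') + conj (u' - u) * v' := by
    simp only [map_sub]
    ring
  have key : ‖u‖ * ‖v - v'‖ ≤ 16 * A * δ + δ * (A + δ) := by
    rw [← norm_conj u, ← norm_mul, hsplit]
    refine (norm_add_le _ _).trans (add_le_add huv ?_)
    rw [norm_mul, norm_conj, norm_sub_rev]
    exact mul_le_mul huu' hv' (norm_nonneg _) hδ
  nlinarith [norm_nonneg (v - v')]

theorem exists_norm_eq_one_norm_sub_mul_eq (z w : 𝕜) :
    ∃ l : 𝕜, ‖l‖ = 1 ∧ ‖z - l * w‖ = |‖z‖ - ‖w‖| := by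
  rcases eq_or_ne z 0 with rfl | hz
  · exact ⟨1, norm_one, by simp⟩
  rcases eq_or_ne w 0 with rfl | hw
  · exact ⟨1, norm_one, by simp⟩
  have hz' : (‖z‖ : 𝕜) ≠ 0 := ofReal_ne_zero.mpr (norm_ne_zero_iff.mpr hz)
  have hw' : (‖w‖ : 𝕜) ≠ 0 := ofReal_ne_zero.mpr (norm_ne_zero_iff.mpr hw)
  refine ⟨(z / ‖z‖) / (w / ‖w‖), ?_, ?_⟩
  · simp [norm_div, hz, hw]
  · have : z - (z / ‖z‖) / (w / ‖w‖) * w = z / ‖z‖ * ((‖z‖ - ‖w‖ : ℝ) : 𝕜) := by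
      push_cast
      field_simp
    rw [this, norm_mul, norm_ofReal]
    simp [norm_div, hz]

/-- The phase is read off a coordinate where `a` is nearly maximal, and polarization transports
it to every other coordinate. -/
theorem exists_norm_eq_one_norm_sub_mul_le (a b : C₀(ℕ, 𝕜)) {δ : ℝ} (hδ : 0 ≤ δ)
    (h₀ : ∀ i, |‖a i‖ - ‖b i‖| ≤ δ)
    (hre : ∀ i j, i < j →
      |‖a i + ((2⁻¹ : ℝ) : 𝕜) * a j‖ - ‖b i + ((2⁻¹ : ℝ) : 𝕜) * b j‖| ≤ 3 / 2 * δ)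
    (him : ∀ i j, i < j →
      |‖a i + ((2⁻¹ : ℝ) : 𝕜) * I * a j‖ - ‖b i + ((2⁻¹ : ℝ) : 𝕜) * I * b j‖| ≤ 3 / 2 * δ) :
    ∃ l : 𝕜, ‖l‖ = 1 ∧ ∀ i, ‖a i - l * b i‖ ≤ 24 * δ := by
  set A := ‖a‖
  have ha : ∀ i, ‖a i‖ ≤ A := a.norm_apply_le
  have hb : ∀ i, ‖b i‖ ≤ A + δ := fun i => by linarith [(abs_le.mp (h₀ i)).1, ha i]
  rcases le_or_gt A (8 * δ) with hsmall | hA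
  · refine ⟨1, norm_one, fun i => ?_⟩
    rw [one_mul]
    linarith [norm_sub_le (a i) (b i), ha i, hb i]
  obtain ⟨i₀, hi₀⟩ := a.exists_lt_norm_apply (r := 3 / 4 * A) (by positivity) (by linarith)
  obtain ⟨l, hl, hli₀⟩ := exists_norm_eq_one_norm_sub_mul_eq (a i₀) (b i₀)
  have hpair : ∀ i j, i < j → ‖conj (a i) * a j - conj (b i) * b j‖ ≤ 16 * A * δ := by
    intro i j hij
    have := norm_conj_mul_sub_le (M := A + δ) (by linarith [ha i]) (by linarith [ha j]) (hb i)
      (hb j) (h₀ i) (h₀ j) (hre i j hij) (him i j hij)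
    nlinarith
  have hphase : ∀ i, conj (l * b i₀) * (l * b i) = conj (b i₀) * b i := fun i => by
    rw [map_mul, mul_mul_mul_comm, RCLike.conj_mul, hl]
    simp
  refine ⟨l, hl, fun i => ?_⟩
  rcases eq_or_ne i i₀ with rfl | hi
  · linarith [h₀ i]
  refine norm_sub_le_of_norm_conj_mul_sub_le hδ hA hi₀.le (hli₀.trans_le (h₀ i₀))
    (by rw [norm_mul, hl, one_mul]; exact hb i) ?_
  rw [hphase]
  rcases hi.lt_or_gt with h | h
  · rw [← norm_conj, map_sub, map_mul, map_mul, conj_conj, conj_conj, mul_comm (a i₀),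
      mul_comm (b i₀)]
    exact hpair i i₀ h
  · exact hpair i₀ i h

end PhaseRetrieval

section SPREmbedding

open Ordinal RCLike

variable (𝕜 : Type*) [RCLike 𝕜]

def pairCoeff (q : ℕ) : 𝕜 :=
  if Even q then ((2⁻¹ : ℝ) : 𝕜) else ((2⁻¹ : ℝ) : 𝕜) * I

/-- The value at `ω * n + k` of the function on `[1, ω * ω]` attached to a sequence `a`: the
point `ω * n + 1` carries `a n`, the points `ω * n + (q + 2)` carry `a n` combined with `a m`
for `m > n` (once with coefficient `1 / 2` and once with `I / 2`), and the limit point `ω * n`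
carries the limit `2 / 3 * a (n - 1)` of the previous row (the junk value at `n = 0` belongs to
the point `0 ∉ [1, ω * ω]`). The factor `2 / 3` makes the embedding isometric. -/
def gridValue (n : ℕ) : ℕ → (ℕ → 𝕜) →ₗ[𝕜] 𝕜
  | 0 => ((2 / 3 : ℝ) : 𝕜) • LinearMap.proj (n - 1)
  | 1 => LinearMap.proj n
  | q + 2 => ((2 / 3 : ℝ) : 𝕜) •
      (LinearMap.proj n + pairCoeff 𝕜 q • LinearMap.proj (n + 1 + q / 2))

open Classical in
def sprFun (p : Ordinal) : (ℕ → 𝕜) →ₗ[𝕜] 𝕜 :=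
  if h : ∃ nk : ℕ × ℕ, p = ω * nk.1 + nk.2 then gridValue 𝕜 h.choose.1 h.choose.2 else 0

variable {𝕜}

theorem norm_pairCoeff_le (q : ℕ) : ‖pairCoeff 𝕜 q‖ ≤ 2⁻¹ := by
  have hhalf : ‖((2⁻¹ : ℝ) : 𝕜)‖ = 2⁻¹ := by rw [norm_ofReal]; norm_num
  unfold pairCoeff
  split_ifs
  · exact hhalf.le
  · rw [norm_mul, hhalf]
    exact mul_le_of_le_one_right (by norm_num) norm_I_le_one

theorem norm_gridValue_le {a : ℕ → 𝕜} {n : ℕ} {A : ℝ} (hA : ∀ i, n - 1 ≤ i → ‖a i‖ ≤ A)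
    (k : ℕ) : ‖gridValue 𝕜 n k a‖ ≤ A := by
  have h23 : ‖((2 / 3 : ℝ) : 𝕜)‖ = 2 / 3 := by rw [norm_ofReal]; norm_num
  match k with
  | 0 =>
    simp only [gridValue, LinearMap.smul_apply, LinearMap.proj_apply, norm_smul, h23]
    linarith [hA (n - 1) le_rfl, norm_nonneg (a (n - 1))]
  | 1 => exact hA n (Nat.sub_le n 1)
  | q + 2 =>
    simp only [gridValue, LinearMap.smul_apply, LinearMap.add_apply, LinearMap.proj_apply,
      norm_smul, h23]
    have hn := hA n (Nat.sub_le n 1)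
    have hm := hA (n + 1 + q / 2) (by omega)
    have := mul_le_mul (norm_pairCoeff_le (𝕜 := 𝕜) q) hm (norm_nonneg _) (by norm_num)
    rw [← norm_smul] at this
    nlinarith [norm_add_le (a n) (pairCoeff 𝕜 q • a (n + 1 + q / 2)), norm_nonneg (a n)]

theorem sprFun_omega0_mul_add (n k : ℕ) : sprFun 𝕜 (ω * n + k) = gridValue 𝕜 n k := by
  have h : ∃ nk : ℕ × ℕ, ω * (n : Ordinal) + k = ω * nk.1 + nk.2 := ⟨(n, k), rfl⟩
  rw [sprFun, dif_pos h]
  obtain ⟨hn, hk⟩ := omega0_mul_add_inj.mp h.choose_spec.symm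
  rw [hn, hk]

theorem sprFun_of_not_lt {p : Ordinal} (hp : ¬p < ω * ω) : sprFun 𝕜 p = 0 := by
  refine dif_neg ?_
  rintro ⟨nk, rfl⟩
  exact hp (omega0_mul_add_lt_omega0_mul_omega0 _ _)

theorem continuousAt_sprFun_omega0_mul_succ (a : C₀(ℕ, 𝕜)) (m : ℕ) :
    ContinuousAt (fun q => sprFun 𝕜 q a) (ω * ↑(m + 1) + ((0 : ℕ) : Ordinal)) := by
  have hm : ∀ k : ℕ, ω * m + (k : Ordinal) < ω * ↑(m + 1) + ((0 : ℕ) : Ordinal) := fun k =>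
    omega0_mul_add_lt_omega0_mul_add_iff.mpr (Or.inl m.lt_succ_self)
  refine continuousAt_of_forall_dist_lt ⟨_, hm 0⟩ fun ε hε => ?_
  obtain ⟨N, hN⟩ := a.exists_forall_norm_le (half_pos hε)
  refine ⟨ω * m + ↑(2 * N + 2), hm _, fun q hq₁ hq₂ => ?_⟩
  obtain ⟨m', k, rfl⟩ :=
    exists_eq_omega0_mul_add (hq₂.trans (omega0_mul_add_lt_omega0_mul_omega0 _ _))
  rw [omega0_mul_add_lt_omega0_mul_add_iff] at hq₁ hq₂
  obtain ⟨rfl, q, rfl⟩ : m = m' ∧ ∃ q, k = q + 2 := ⟨by omega, k - 2, by omega⟩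
  rw [sprFun_omega0_mul_add, sprFun_omega0_mul_add, dist_eq_norm]
  simp only [gridValue, LinearMap.smul_apply, LinearMap.add_apply, LinearMap.proj_apply,
    Nat.add_sub_cancel, smul_add, add_sub_cancel_left, norm_smul, norm_ofReal]
  have := mul_le_mul (norm_pairCoeff_le (𝕜 := 𝕜) q) (hN (m + 1 + q / 2) (by omega))
    (norm_nonneg _) (by norm_num)
  nlinarith [norm_nonneg (pairCoeff 𝕜 q), norm_nonneg (a (m + 1 + q / 2))]

theorem continuousAt_sprFun_omega0_mul_omega0 (a : C₀(ℕ, 𝕜)) :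
    ContinuousAt (fun q => sprFun 𝕜 q a) (ω * ω) := by
  refine continuousAt_of_forall_dist_lt ⟨0, mul_pos omega0_pos omega0_pos⟩ fun ε hε => ?_
  obtain ⟨N, hN⟩ := a.exists_forall_norm_le (half_pos hε)
  refine ⟨ω * ↑(N + 1) + ((0 : ℕ) : Ordinal), omega0_mul_add_lt_omega0_mul_omega0 _ _,
    fun q hq₁ hq₂ => ?_⟩
  obtain ⟨m, k, rfl⟩ := exists_eq_omega0_mul_add hq₂
  rw [omega0_mul_add_lt_omega0_mul_add_iff] at hq₁
  rw [sprFun_omega0_mul_add, sprFun_of_not_lt (lt_irrefl _), LinearMap.zero_apply,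
    dist_zero_right]
  exact (norm_gridValue_le (fun i hi => hN i (by omega)) k).trans_lt (half_lt_self hε)

theorem continuousAt_sprFun (a : C₀(ℕ, 𝕜)) {p : Ordinal} (hp : p ≤ ω * ω) :
    ContinuousAt (fun q => sprFun 𝕜 q a) p := by
  rcases hp.lt_or_eq with hp | rfl
  · obtain ⟨n, _ | j, rfl⟩ := exists_eq_omega0_mul_add hp
    · obtain _ | m := n
      · simpa using continuousAt_of_not_isSuccLimit not_isSuccLimit_zero
      · exact continuousAt_sprFun_omega0_mul_succ a m
    · have hsucc : ω * n + ↑(j + 1) = Order.succ (ω * n + j) := by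
        rw [Nat.cast_succ, ← add_assoc, Order.succ_eq_add_one]
      rw [hsucc]
      exact continuousAt_of_not_isSuccLimit (Order.not_isSuccLimit_succ _)
  · exact continuousAt_sprFun_omega0_mul_omega0 a

def sprMap (a : C₀(ℕ, 𝕜)) : C(Icc (1 : Ordinal.{0}) (ω ^ (2 : Ordinal.{0})), 𝕜) :=
  ⟨fun p => sprFun 𝕜 p.1 a, continuous_iff_continuousAt.mpr fun p =>
    (continuousAt_sprFun a (omega0_opow_two ▸ p.2.2)).comp continuous_subtype_val.continuousAt⟩

def gridPoint (n k : ℕ) : Icc (1 : Ordinal.{0}) (ω ^ (2 : Ordinal.{0})) :=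
  ⟨ω * n + ↑(k + 1), (by exact_mod_cast k.succ_pos : (1 : Ordinal) ≤ ↑(k + 1)).trans le_add_self,
    omega0_opow_two ▸ (omega0_mul_add_lt_omega0_mul_omega0 n (k + 1)).le⟩

theorem sprMap_gridPoint (a : C₀(ℕ, 𝕜)) (n k : ℕ) :
    sprMap a (gridPoint n k) = gridValue 𝕜 n (k + 1) a :=
  LinearMap.congr_fun (sprFun_omega0_mul_add n (k + 1)) a

theorem norm_sprMap (a : C₀(ℕ, 𝕜)) : ‖sprMap a‖ = ‖a‖ := by
  refine le_antisymm ((ContinuousMap.norm_le _ (norm_nonneg a)).mpr fun p => ?_)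
    (a.norm_le_of_forall (norm_nonneg _) fun n => ?_)
  · show ‖sprFun 𝕜 p.1 a‖ ≤ ‖a‖
    by_cases hp : p.1 < ω * ω
    · obtain ⟨n, k, hnk⟩ := exists_eq_omega0_mul_add hp
      rw [hnk, sprFun_omega0_mul_add]
      exact norm_gridValue_le (fun i _ => a.norm_apply_le i) k
    · rw [sprFun_of_not_lt hp, LinearMap.zero_apply, norm_zero]
      exact norm_nonneg a
  · have h := (sprMap a).norm_coe_le_norm (gridPoint n 0)
    rwa [sprMap_gridPoint] at h

variable (𝕜) in
def sprEmbedding : C₀(ℕ, 𝕜) →ₗᵢ[𝕜] C(Icc (1 : Ordinal.{0}) (ω ^ (2 : Ordinal.{0})), 𝕜) where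
  toFun := sprMap
  map_add' a b := ContinuousMap.ext fun p => map_add (sprFun 𝕜 p.1) ⇑a ⇑b
  map_smul' c a := ContinuousMap.ext fun p => map_smul (sprFun 𝕜 p.1) c ⇑a
  norm_map' := norm_sprMap

theorem doesCSPR_range_sprEmbedding :
    DoesCSPR (LinearMap.range (sprEmbedding 𝕜).toLinearMap) 24 := by
  rintro _ ⟨a, rfl⟩ _ ⟨b, rfl⟩
  set δ := ‖cmAbs (sprEmbedding 𝕜 a) - cmAbs (sprEmbedding 𝕜 b)‖
  have hgrid : ∀ n k, |‖gridValue 𝕜 n (k + 1) a‖ - ‖gridValue 𝕜 n (k + 1) b‖| ≤ δ := by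
    intro n k
    rw [← sprMap_gridPoint, ← sprMap_gridPoint]
    exact abs_norm_sub_norm_le_norm_cmAbs_sub _ _ _
  have hpair : ∀ i j q, i + 1 + q / 2 = j →
      |‖a i + pairCoeff 𝕜 q * a j‖ - ‖b i + pairCoeff 𝕜 q * b j‖| ≤ 3 / 2 * δ := by
    rintro i j q rfl
    have h := hgrid i (q + 1)
    simp only [gridValue, LinearMap.smul_apply, LinearMap.add_apply, LinearMap.proj_apply,
      _root_.smul_eq_mul, norm_mul, RCLike.norm_ofReal] at h
    rw [← _root_.mul_sub, abs_mul, abs_abs, abs_of_pos (by norm_num : (0 : ℝ) < 2 / 3)] at h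
    linarith
  obtain ⟨l, hl, hab⟩ := exists_norm_eq_one_norm_sub_mul_le a b (norm_nonneg _)
    (fun i => hgrid i 0)
    (fun i j hij => by simpa [pairCoeff] using hpair i j (2 * (j - i - 1)) (by omega))
    (fun i j hij => by
      simpa [pairCoeff, Nat.not_even_two_mul_add_one] using
        hpair i j (2 * (j - i - 1) + 1) (by omega))
  calc sprInf _ _ ≤ ‖sprEmbedding 𝕜 a - l • sprEmbedding 𝕜 b‖ := sprInf_le hl
    _ = ‖a - l • b‖ := by rw [← map_smul, ← map_sub, LinearIsometry.norm_map]
    _ ≤ 24 * δ := ZeroAtInftyContinuousMap.norm_le_of_forall (by positivity) hab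

end SPREmbedding

/-- Let `K` be a scattered compact Hausdorff space (no nonempty perfect
subsets) whose derived set is infinite, over real or complex scalars. Then there is a linear
isometric embedding `T : C₀[1, ω²) → C(K)` preserving moduli; consequently `C(K)` contains an
isometric copy of `c₀` that does SPR. -/
theorem scattered_modulus_preserving_embedding {𝕜 : Type*} [RCLike 𝕜]
    {K : Type*} [TopologicalSpace K] [CompactSpace K] [T2Space K]
    (hscat : ¬∃ P : Set K, P.Nonempty ∧ Perfect P)
    (hinf : (derivedSet (Set.univ : Set K)).Infinite) :
    (∃ T : (C0sub 𝕜) →ₗᵢ[𝕜] C(K, 𝕜),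
      ∀ f : C0sub 𝕜, T ⟨kAbs (f : C(_, 𝕜)), kAbs_mem f⟩ = kAbs (T f)) ∧
    ∃ J : C₀(ℕ, 𝕜) →ₗᵢ[𝕜] C(K, 𝕜), DoesSPR (LinearMap.range J.toLinearMap) := by
  obtain ⟨φ, hφ⟩ := exists_continuous_surjective_Icc_one_omega0_opow_two hscat hinf
  set T := ContinuousMap.compRightLinearIsometry 𝕜 φ hφ
  refine ⟨⟨T.comp (C0sub 𝕜).subtypeₗᵢ, fun f => rfl⟩, T.comp (sprEmbedding 𝕜), 24, by norm_num,
    ?_⟩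
  rw [show (T.comp (sprEmbedding 𝕜)).toLinearMap =
    T.toLinearMap ∘ₗ (sprEmbedding 𝕜).toLinearMap from rfl, LinearMap.range_comp]
  exact doesCSPR_range_sprEmbedding.map_compRightLinearIsometry hφ
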